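/- arXiv:2406.19866 — 4 statements merged into one kernel-verified Lean document; each statement's English description precedes it below -/
import Mathlib

section
/- Let n ≥ 1 and let A_1, A_2, A_3 be pairwise distinct nonempty subsets of {1,...,n}. For each subset A let α_A = Σ_{i∈A} x_i be the corresponding 0/1 linear form on Q^n and H_A = ker α_A. Then the subspace H_{A_1} ∩ H_{A_2} ∩ H_{A_3} has codimension 2 in Q^n if and only if there is a permutation (i_1,i_2,i_3) of (1,2,3) with A_{i_1} and A_{i_2} disjoint and A_{i_1} ∪ A_{i_2} = A_{i_3}. -/
/-- The 0/1 linear form `α_A = Σ_{i ∈ A} x_i` on `ℚ^n`. -/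
noncomputable def alphaForm (n : ℕ) (A : Finset (Fin n)) : (Fin n → ℚ) →ₗ[ℚ] ℚ :=
  ∑ i ∈ A, LinearMap.proj i

/-!
The three kernels intersect in the annihilator of the span of the forms, so the codimension is the
rank of `α_{A₁}, α_{A₂}, α_{A₃}`; it is at least 2 because distinct nonempty sets give independent
pairs, and it is 2 exactly when there is a relation `c₁ α_{A₁} + c₂ α_{A₂} + c₃ α_{A₃} = 0`.
Evaluated at the basis vector `eᵢ`, the relation says that the `c_k` with `i ∈ A_k` sum to zero.
All `c_k` are then nonzero and two of them, say `c₁, c₂`, have the same sign, so they never cancel: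
every point of `A₁ ∪ A₂` lies in `A₃` and conversely. A point of `A₁ ∩ A₂` would give
`c₁ + c₂ + c₃ = 0`, which together with `c₁ + c₃ = 0` or `c₂ + c₃ = 0`, coming from a point of
`A₁ ∆ A₂`, makes `c₂` or `c₁` vanish.
-/

open Module Submodule

section IndicatorRelations

variable {ι : Type*} [DecidableEq ι]

lemma eq_zero_of_ite_add_ite_eq_zero {M : Type*} [AddCommMonoid M] {A B : Finset ι} {a b : M}
    (hA : A.Nonempty) (hB : B.Nonempty) (hAB : A ≠ B)
    (h : ∀ i, (if i ∈ A then a else 0) + (if i ∈ B then b else 0) = 0) :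
    a = 0 ∧ b = 0 := by
  wlog hsub : ¬A ⊆ B generalizing A B a b
  · have hBA : ¬B ⊆ A := fun hBA => hAB (Finset.Subset.antisymm (not_not.1 hsub) hBA)
    exact (this hB hA hAB.symm (fun i => by rw [add_comm]; exact h i) hBA).symm
  obtain ⟨i, hiA, hiB⟩ := Finset.not_subset.1 hsub
  have ha : a = 0 := by simpa [hiA, hiB] using h i
  obtain ⟨j, hjB⟩ := hB
  exact ⟨ha, by simpa [hjB, ha] using h j⟩

variable {K : Type*} [Field K] [LinearOrder K] [IsStrictOrderedRing K]

lemma pos_mul_or_pos_mul_or_pos_mul {a b c : K} (ha : a ≠ 0) (hb : b ≠ 0) (hc : c ≠ 0) :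
    0 < a * b ∨ 0 < a * c ∨ 0 < b * c := by
  by_contra! h
  -- the product of the three products is the square `(a * b * c) ^ 2`
  have hsq : 0 < (a * b * c) ^ 2 := by positivity
  nlinarith [mul_nonpos_of_nonneg_of_nonpos (mul_nonneg_of_nonpos_of_nonpos h.1 h.2.1) h.2.2]

lemma disjoint_and_union_eq_of_ite_sum_eq_zero {A B C : Finset ι} {a b c : K}
    (hab : 0 < a * b) (hc : c ≠ 0) (hAB : A ≠ B)
    (h : ∀ i, (if i ∈ A then a else 0) + (if i ∈ B then b else 0) +
      (if i ∈ C then c else 0) = 0) :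
    Disjoint A B ∧ A ∪ B = C := by
  have ha : a ≠ 0 := left_ne_zero_of_mul hab.ne'
  have hb : b ≠ 0 := right_ne_zero_of_mul hab.ne'
  have hsum : ∀ i ∈ A ∪ B, (if i ∈ A then a else 0) + (if i ∈ B then b else 0) ≠ 0 := by
    intro i hi
    have hab' : a + b ≠ 0 := fun h0 => by
      have : a * b = -a ^ 2 := by linear_combination a * h0
      nlinarith [sq_nonneg a]
    rcases Finset.mem_union.1 hi with hiA | hiB
    · by_cases hiB : i ∈ B <;> simp [hiA, hiB, ha, hab']
    · by_cases hiA : i ∈ A <;> simp [hiA, hiB, hb, hab']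
  have hunion : A ∪ B = C := by
    ext i
    refine ⟨fun hi => ?_, fun hiC => ?_⟩
    · by_contra hiC
      exact hsum i hi (by simpa [hiC] using h i)
    · by_contra hi
      rw [Finset.mem_union, not_or] at hi
      exact hc (by simpa [hiC, hi.1, hi.2] using h i)
  refine ⟨Finset.disjoint_left.2 fun j hjA hjB => ?_, hunion⟩
  have hjC : j ∈ C := hunion ▸ Finset.mem_union_left B hjA
  have hj : a + b + c = 0 := by simpa [hjA, hjB, hjC] using h j
  obtain ⟨i, hi⟩ := Finset.symmDiff_nonempty.2 hAB
  rcases Finset.mem_symmDiff.1 hi with ⟨hiA, hiB⟩ | ⟨hiB, hiA⟩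
  · have hiC : i ∈ C := hunion ▸ Finset.mem_union_left B hiA
    exact hb (by linarith [show a + c = 0 by simpa [hiA, hiB, hiC] using h i])
  · have hiC : i ∈ C := hunion ▸ Finset.mem_union_right A hiB
    exact ha (by linarith [show b + c = 0 by simpa [hiA, hiB, hiC] using h i])

lemma disjoint_union_of_ite_sum_eq_zero {A₁ A₂ A₃ : Finset ι}
    (h1 : A₁.Nonempty) (h2 : A₂.Nonempty) (h3 : A₃.Nonempty)
    (h12 : A₁ ≠ A₂) (h13 : A₁ ≠ A₃) (h23 : A₂ ≠ A₃)
    {c₁ c₂ c₃ : K} (hc : c₁ ≠ 0 ∨ c₂ ≠ 0 ∨ c₃ ≠ 0)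
    (h : ∀ i, (if i ∈ A₁ then c₁ else 0) + (if i ∈ A₂ then c₂ else 0) +
      (if i ∈ A₃ then c₃ else 0) = 0) :
    (Disjoint A₁ A₂ ∧ A₁ ∪ A₂ = A₃) ∨
      (Disjoint A₁ A₃ ∧ A₁ ∪ A₃ = A₂) ∨
      (Disjoint A₂ A₃ ∧ A₂ ∪ A₃ = A₁) := by
  have hc₁ : c₁ ≠ 0 := fun h0 => by
    obtain ⟨e₂, e₃⟩ := eq_zero_of_ite_add_ite_eq_zero h2 h3 h23 fun i => by simpa [h0] using h i
    simp [h0, e₂, e₃] at hc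
  have hc₂ : c₂ ≠ 0 := fun h0 => by
    obtain ⟨e₁, e₃⟩ := eq_zero_of_ite_add_ite_eq_zero h1 h3 h13 fun i => by simpa [h0] using h i
    simp [h0, e₁, e₃] at hc
  have hc₃ : c₃ ≠ 0 := fun h0 => by
    obtain ⟨e₁, e₂⟩ := eq_zero_of_ite_add_ite_eq_zero h1 h2 h12 fun i => by simpa [h0] using h i
    simp [h0, e₁, e₂] at hc
  rcases pos_mul_or_pos_mul_or_pos_mul hc₁ hc₂ hc₃ with h₁₂ | h₁₃ | h₂₃
  · exact .inl (disjoint_and_union_eq_of_ite_sum_eq_zero h₁₂ hc₃ h12 h)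
  · exact .inr <| .inl <| disjoint_and_union_eq_of_ite_sum_eq_zero h₁₃ hc₂ h13
      fun i => by linear_combination h i
  · exact .inr <| .inr <| disjoint_and_union_eq_of_ite_sum_eq_zero h₂₃ hc₁ h23
      fun i => by linear_combination h i

end IndicatorRelations

lemma finrank_ker_inf_ker_inf_ker_add_finrank_span {K V : Type*} [Field K] [AddCommGroup V]
    [Module K V] [FiniteDimensional K V] (f g h : Dual K V) :
    finrank K ↥(LinearMap.ker f ⊓ LinearMap.ker g ⊓ LinearMap.ker h) +
      finrank K (span K (Set.range ![f, g, h])) = finrank K V := by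
  have hker : LinearMap.ker f ⊓ LinearMap.ker g ⊓ LinearMap.ker h =
      (span K (Set.range ![f, g, h])).dualCoannihilator := by
    refine SetLike.ext' ?_
    rw [coe_dualCoannihilator_span]
    ext x
    simp only [Matrix.range_cons, Matrix.range_empty, Set.union_empty, Set.singleton_union,
      Set.forall_mem_insert, Set.mem_singleton_iff, forall_eq, Set.mem_ofPred_eq,
      SetLike.mem_coe, mem_inf, LinearMap.mem_ker, and_assoc]
  rw [hker, add_comm]
  exact Subspace.finrank_add_finrank_dualCoannihilator_eq _

section Triple

variable {K V : Type*} [Field K] [AddCommGroup V] [Module K V] {x y z : V}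

lemma two_le_finrank_span_triple (hxy : LinearIndependent K ![x, y]) :
    2 ≤ finrank K (span K (Set.range ![x, y, z])) := by
  have := Module.Finite.span_of_finite K (Set.finite_range ![x, y, z])
  calc 2 = finrank K (span K (Set.range ![x, y])) := (finrank_span_eq_card hxy).symm
    _ ≤ _ := Submodule.finrank_mono (span_mono (by simp [Matrix.range_cons, Set.subset_def]))

lemma finrank_span_triple_eq_two_iff (hxy : LinearIndependent K ![x, y]) :
    finrank K (span K (Set.range ![x, y, z])) = 2 ↔ ¬LinearIndependent K ![x, y, z] := by
  have hle : finrank K (span K (Set.range ![x, y, z])) ≤ 3 :=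
    (finrank_range_le_card _).trans_eq (Fintype.card_fin 3)
  have hge := two_le_finrank_span_triple (z := z) hxy
  rw [linearIndependent_iff_card_eq_finrank_span, Fintype.card_fin, Set.finrank]
  omega

end Triple

section AlphaForm

variable {n : ℕ}

lemma alphaForm_apply_single (A : Finset (Fin n)) (i : Fin n) :
    alphaForm n A (Pi.single i 1) = if i ∈ A then 1 else 0 := by
  simp [alphaForm, Pi.single_apply]

lemma alphaForm_union {A B : Finset (Fin n)} (h : Disjoint A B) :
    alphaForm n (A ∪ B) = alphaForm n A + alphaForm n B :=
  Finset.sum_union h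

lemma linearIndependent_alphaForm_pair {A B : Finset (Fin n)} (hA : A.Nonempty)
    (hB : B.Nonempty) (hAB : A ≠ B) : LinearIndependent ℚ ![alphaForm n A, alphaForm n B] := by
  refine LinearIndependent.pair_iff.2 fun s t hst =>
    eq_zero_of_ite_add_ite_eq_zero hA hB hAB fun i => ?_
  simpa [alphaForm_apply_single] using LinearMap.congr_fun hst (Pi.single i 1)

lemma not_linearIndependent_alphaForm_iff {A₁ A₂ A₃ : Finset (Fin n)}
    (h1 : A₁.Nonempty) (h2 : A₂.Nonempty) (h3 : A₃.Nonempty)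
    (h12 : A₁ ≠ A₂) (h13 : A₁ ≠ A₃) (h23 : A₂ ≠ A₃) :
    ¬LinearIndependent ℚ ![alphaForm n A₁, alphaForm n A₂, alphaForm n A₃] ↔
      (Disjoint A₁ A₂ ∧ A₁ ∪ A₂ = A₃) ∨
      (Disjoint A₁ A₃ ∧ A₁ ∪ A₃ = A₂) ∨
      (Disjoint A₂ A₃ ∧ A₂ ∪ A₃ = A₁) := by
  rw [Fintype.not_linearIndependent_iff]
  constructor
  · rintro ⟨c, hc, k, hk⟩
    refine disjoint_union_of_ite_sum_eq_zero h1 h2 h3 h12 h13 h23 (c₁ := c 0) (c₂ := c 1)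
      (c₃ := c 2) (by fin_cases k <;> simp_all) fun i => ?_
    simpa [Fin.sum_univ_three, alphaForm_apply_single] using LinearMap.congr_fun hc (Pi.single i 1)
  · rintro (⟨hd, rfl⟩ | ⟨hd, rfl⟩ | ⟨hd, rfl⟩)
    · exact ⟨![1, 1, -1], by simp [Fin.sum_univ_three, alphaForm_union hd]; abel, 0, by simp⟩
    · exact ⟨![1, -1, 1], by simp [Fin.sum_univ_three, alphaForm_union hd], 0, by simp⟩
    · exact ⟨![-1, 1, 1], by simp [Fin.sum_univ_three, alphaForm_union hd], 0, by simp⟩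

end AlphaForm

theorem stmt0_general (n : ℕ) (A₁ A₂ A₃ : Finset (Fin n))
    (h1 : A₁.Nonempty) (h2 : A₂.Nonempty) (h3 : A₃.Nonempty)
    (h12 : A₁ ≠ A₂) (h13 : A₁ ≠ A₃) (h23 : A₂ ≠ A₃) :
    Module.finrank ℚ
        ↥(LinearMap.ker (alphaForm n A₁) ⊓ LinearMap.ker (alphaForm n A₂) ⊓
          LinearMap.ker (alphaForm n A₃)) = n - 2 ↔
      (Disjoint A₁ A₂ ∧ A₁ ∪ A₂ = A₃) ∨
      (Disjoint A₁ A₃ ∧ A₁ ∪ A₃ = A₂) ∨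
      (Disjoint A₂ A₃ ∧ A₂ ∪ A₃ = A₁) := by
  have hpair := linearIndependent_alphaForm_pair h1 h2 h12
  have hdim := finrank_ker_inf_ker_inf_ker_add_finrank_span (alphaForm n A₁) (alphaForm n A₂)
    (alphaForm n A₃)
  have hge := two_le_finrank_span_triple (z := alphaForm n A₃) hpair
  rw [finrank_fin_fun] at hdim
  rw [← not_linearIndependent_alphaForm_iff h1 h2 h3 h12 h13 h23,
    ← finrank_span_triple_eq_two_iff hpair]
  generalize finrank ℚ (span ℚ (Set.range ![alphaForm n A₁, alphaForm n A₂, alphaForm n A₃])) = r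
    at *
  omega

theorem stmt0 (n : ℕ) (hn : 1 ≤ n) (A₁ A₂ A₃ : Finset (Fin n))
    (h1 : A₁.Nonempty) (h2 : A₂.Nonempty) (h3 : A₃.Nonempty)
    (h12 : A₁ ≠ A₂) (h13 : A₁ ≠ A₃) (h23 : A₂ ≠ A₃) :
    Module.finrank ℚ
        ↥(LinearMap.ker (alphaForm n A₁) ⊓ LinearMap.ker (alphaForm n A₂) ⊓
          LinearMap.ker (alphaForm n A₃)) = n - 2 ↔
      (Disjoint A₁ A₂ ∧ A₁ ∪ A₂ = A₃) ∨
      (Disjoint A₁ A₃ ∧ A₁ ∪ A₃ = A₂) ∨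
      (Disjoint A₂ A₃ ∧ A₂ ∪ A₃ = A₁) :=
  stmt0_general n A₁ A₂ A₃ h1 h2 h3 h12 h13 h23
end

section
/- Let k ≥ 1 and consider S = Q[x,y]. The derivations θ_1 = x^{2k} y ∂_x + x y^{2k} ∂_y and θ_2 = x^{2k+1} ∂_x + y^{2k+1} ∂_y satisfy: θ_i(x) is divisible by x^{2k}, θ_i(y) is divisible by y^{2k}, θ_i(x+y) is divisible by (x+y), and θ_i(x−y) is divisible by (x−y), for i = 1,2. Moreover the determinant of the coefficient matrix ((θ_1(x), θ_1(y)), (θ_2(x), θ_2(y))) equals −x^{2k} y^{2k} (x+y)(x−y) up to sign. Hence θ_1, θ_2 form a basis of the module of multiderivations D(B, ν) for the rank-2 multiarrangement with defining polynomial x^{2k} y^{2k} (x+y)(x−y), and this multiarrangement is free with exponents (2k+1, 2k+1). -/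
noncomputable section
open MvPolynomial

/-- polynomial ring in two variables `x, y` -/
abbrev S₂ : Type := MvPolynomial (Fin 2) ℚ

def px : S₂ := X 0
def py : S₂ := X 1

/-- The module of multiderivations of the rank-2 multiarrangement with defining
polynomial `x^a y^b (x+y)^c (x-y)^d`, where a derivation `θ` is recorded by the
pair `(θ(x), θ(y))`. -/
def Dmulti (a b c d : ℕ) : Set (S₂ × S₂) :=
  {θ | px ^ a ∣ θ.1 ∧ py ^ b ∣ θ.2 ∧ (px + py) ^ c ∣ (θ.1 + θ.2) ∧
    (px - py) ^ d ∣ (θ.1 - θ.2)}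


/-! Saito's criterion in rank two. The coefficient determinant of any two elements of `D(B, ν)`
is divisible by each `α_H ^ ν(H)`, hence by `Q = ∏ α_H ^ ν(H)`, because `x, y, x + y, x - y` are
pairwise non-associate primes. Cramer's rule
`det(θ₁, θ₂) • θ = det(θ, θ₂) • θ₁ + det(θ₁, θ) • θ₂`
therefore writes every `θ ∈ D(B, ν)` as an `S`-combination of `θ₁, θ₂` once `det(θ₁, θ₂)` is
associated to `Q`. -/

section CoeffDet

variable {R : Type*} [CommRing R]

def coeffDet (θ θ' : R × R) : R := θ.1 * θ'.2 - θ.2 * θ'.1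

lemma coeffDet_smul_eq (θ₁ θ₂ θ : R × R) :
    coeffDet θ₁ θ₂ • θ = coeffDet θ θ₂ • θ₁ + coeffDet θ₁ θ • θ₂ := by
  ext <;> simp only [coeffDet, Prod.smul_fst, Prod.smul_snd, Prod.fst_add, Prod.snd_add,
    smul_eq_mul] <;> ring

lemma coeffDet_smul_add_smul_left (f g : R) (θ₁ θ₂ : R × R) :
    coeffDet (f • θ₁ + g • θ₂) θ₂ = f * coeffDet θ₁ θ₂ := by
  simp only [coeffDet, Prod.smul_fst, Prod.smul_snd, Prod.fst_add, Prod.snd_add, smul_eq_mul]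
  ring

lemma coeffDet_smul_add_smul_right (f g : R) (θ₁ θ₂ : R × R) :
    coeffDet θ₁ (f • θ₁ + g • θ₂) = g * coeffDet θ₁ θ₂ := by
  simp only [coeffDet, Prod.smul_fst, Prod.smul_snd, Prod.fst_add, Prod.snd_add, smul_eq_mul]
  ring

lemma eq_zero_of_smul_add_smul_eq_zero [NoZeroDivisors R] {θ₁ θ₂ : R × R}
    (hdet : coeffDet θ₁ θ₂ ≠ 0) (f g : R) (h : f • θ₁ + g • θ₂ = 0) : f = 0 ∧ g = 0 := by
  have hf : f * coeffDet θ₁ θ₂ = 0 := by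
    rw [← coeffDet_smul_add_smul_left f g, h]; simp [coeffDet]
  have hg : g * coeffDet θ₁ θ₂ = 0 := by
    rw [← coeffDet_smul_add_smul_right f g, h]; simp [coeffDet]
  exact ⟨(mul_eq_zero.1 hf).resolve_right hdet, (mul_eq_zero.1 hg).resolve_right hdet⟩

end CoeffDet

lemma MvPolynomial.not_dvd_of_eval_eq_zero {σ R : Type*} [CommSemiring R] {p q : MvPolynomial σ R}
    (v : σ → R) (hp : eval v p = 0) (hq : eval v q ≠ 0) : ¬ p ∣ q := fun h =>
  hq (zero_dvd_iff.1 (hp ▸ map_dvd (eval v) h))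

lemma Prime.mul_pow_dvd {M : Type*} [CommMonoidWithZero M] [IsCancelMulZero M] {p m z : M} (hp : Prime p)
    (hpm : ¬ p ∣ m) (hm : m ∣ z) {n : ℕ} (hpz : p ^ n ∣ z) : m * p ^ n ∣ z := by
  obtain ⟨w, rfl⟩ := hm
  exact mul_dvd_mul_left m (hp.pow_dvd_of_dvd_mul_left n hpm hpz)

lemma prime_px_sub_smul_py (c : ℚ) : Prime (px - c • py) := by
  let e := finSuccEquiv ℚ 1
  have he : e (px - c • py) = Polynomial.X - Polynomial.C (c • X 0) := by
    rw [map_sub, map_smul, px, py, finSuccEquiv_X_zero, show (1 : Fin 2) = Fin.succ 0 from rfl,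
      finSuccEquiv_X_succ, Polynomial.smul_C]
  rw [← MulEquiv.prime_iff e.toMulEquiv]
  exact he ▸ Polynomial.prime_X_sub_C _

lemma prime_px_add_py : Prime (px + py) := by
  simpa [sub_eq_add_neg] using prime_px_sub_smul_py (-1)

lemma prime_px_sub_py : Prime (px - py) := by
  simpa using prime_px_sub_smul_py 1

def definingPoly (a b c d : ℕ) : S₂ := px ^ a * py ^ b * (px + py) ^ c * (px - py) ^ d

lemma definingPoly_ne_zero (a b c d : ℕ) : definingPoly a b c d ≠ 0 := by
  unfold definingPoly
  exact mul_ne_zero (mul_ne_zero (mul_ne_zero (pow_ne_zero _ (X_ne_zero 0))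
    (pow_ne_zero _ (X_ne_zero 1))) (pow_ne_zero _ prime_px_add_py.ne_zero))
    (pow_ne_zero _ prime_px_sub_py.ne_zero)

lemma definingPoly_dvd_coeffDet {a b c d : ℕ} {θ θ' : S₂ × S₂} (hθ : θ ∈ Dmulti a b c d)
    (hθ' : θ' ∈ Dmulti a b c d) : definingPoly a b c d ∣ coeffDet θ θ' := by
  obtain ⟨hx, hy, hs, hd⟩ := hθ
  obtain ⟨hx', hy', hs', hd'⟩ := hθ'
  have wx : px ^ a ∣ coeffDet θ θ' := (hx.mul_right _).sub (hx'.mul_left _)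
  have wy : py ^ b ∣ coeffDet θ θ' := (hy'.mul_left _).sub (hy.mul_right _)
  have ws : (px + py) ^ c ∣ coeffDet θ θ' := by
    rw [show coeffDet θ θ' = (θ.1 + θ.2) * θ'.2 - θ.2 * (θ'.1 + θ'.2) by unfold coeffDet; ring]
    exact (hs.mul_right _).sub (hs'.mul_left _)
  have wd : (px - py) ^ d ∣ coeffDet θ θ' := by
    rw [show coeffDet θ θ' = (θ.1 - θ.2) * θ'.2 - θ.2 * (θ'.1 - θ'.2) by unfold coeffDet; ring]
    exact (hd.mul_right _).sub (hd'.mul_left _)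
  refine prime_px_sub_py.mul_pow_dvd ?_ (prime_px_add_py.mul_pow_dvd ?_
    ((X_prime (i := 1)).mul_pow_dvd ?_ wx wy) ws) wd
  · exact not_dvd_of_eval_eq_zero ![1, 1] (by simp [px, py]) (by simp [px, py])
  · exact not_dvd_of_eval_eq_zero ![1, -1] (by simp [px, py]) (by simp [px])
  · exact not_dvd_of_eval_eq_zero ![1, 0] (by simp) (by simp [px])

theorem exists_eq_smul_add_smul_of_mem_Dmulti {a b c d : ℕ} {θ₁ θ₂ : S₂ × S₂}
    (h₁ : θ₁ ∈ Dmulti a b c d) (h₂ : θ₂ ∈ Dmulti a b c d)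
    (hdet : Associated (definingPoly a b c d) (coeffDet θ₁ θ₂)) {θ : S₂ × S₂}
    (hθ : θ ∈ Dmulti a b c d) : ∃ f g : S₂, θ = f • θ₁ + g • θ₂ := by
  obtain ⟨u, hu⟩ := hdet
  obtain ⟨f, hf⟩ := definingPoly_dvd_coeffDet hθ h₂
  obtain ⟨g, hg⟩ := definingPoly_dvd_coeffDet h₁ hθ
  have hQ : definingPoly a b c d • (u • θ) = definingPoly a b c d • (f • θ₁ + g • θ₂) := by
    rw [Units.smul_def, smul_smul, hu, coeffDet_smul_eq, hf, hg, smul_add, mul_smul, mul_smul]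
  refine ⟨↑u⁻¹ * f, ↑u⁻¹ * g, ?_⟩
  rw [mul_smul, mul_smul, ← smul_add, ← smul_right_injective _ (definingPoly_ne_zero a b c d) hQ,
    ← Units.smul_def, inv_smul_smul]

lemma pow_mul_pair_mem_Dmulti (k : ℕ) :
    (px ^ (2 * k) * py, px * py ^ (2 * k)) ∈ Dmulti (2 * k) (2 * k) 1 1 := by
  have hs : px + py ∣ px ^ (2 * k) - py ^ (2 * k) := by
    simpa [(Even.neg_pow ⟨k, two_mul k⟩ py)] using sub_dvd_pow_sub_pow px (-py) (2 * k)
  have hd : px - py ∣ px ^ (2 * k) - py ^ (2 * k) := sub_dvd_pow_sub_pow px py (2 * k)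
  refine ⟨dvd_mul_right _ _, dvd_mul_left _ _, ?_, ?_⟩ <;> simp only [pow_one]
  · rw [show px ^ (2 * k) * py + px * py ^ (2 * k)
      = (px ^ (2 * k) - py ^ (2 * k)) * py + py ^ (2 * k) * (px + py) by ring]
    exact (hs.mul_right _).add (dvd_mul_left _ _)
  · rw [show px ^ (2 * k) * py - px * py ^ (2 * k)
      = (px ^ (2 * k) - py ^ (2 * k)) * py - py ^ (2 * k) * (px - py) by ring]
    exact (hd.mul_right _).sub (dvd_mul_left _ _)

lemma pow_pair_mem_Dmulti {n a b : ℕ} (hn : Odd n) (ha : a ≤ n) (hb : b ≤ n) :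
    (px ^ n, py ^ n) ∈ Dmulti a b 1 1 := by
  simp only [Dmulti, Set.mem_ofPred_eq, pow_one]
  exact ⟨pow_dvd_pow _ ha, pow_dvd_pow _ hb, hn.add_dvd_pow_add_pow px py,
    sub_dvd_pow_sub_pow px py n⟩

theorem stmt4_general (k : ℕ) :
    let θ₁ : S₂ × S₂ := (px ^ (2 * k) * py, px * py ^ (2 * k))
    let θ₂ : S₂ × S₂ := (px ^ (2 * k + 1), py ^ (2 * k + 1))
    θ₁ ∈ Dmulti (2 * k) (2 * k) 1 1 ∧
    θ₂ ∈ Dmulti (2 * k) (2 * k) 1 1 ∧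
    θ₁.1 * θ₂.2 - θ₁.2 * θ₂.1 = -(px ^ (2 * k) * py ^ (2 * k) * (px + py) * (px - py)) ∧
    (∀ θ ∈ Dmulti (2 * k) (2 * k) 1 1, ∃ f g : S₂, θ = f • θ₁ + g • θ₂) ∧
    (∀ f g : S₂, f • θ₁ + g • θ₂ = 0 → f = 0 ∧ g = 0) := by
  intro θ₁ θ₂
  have h₁ : θ₁ ∈ Dmulti (2 * k) (2 * k) 1 1 := pow_mul_pair_mem_Dmulti k
  have h₂ : θ₂ ∈ Dmulti (2 * k) (2 * k) 1 1 :=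
    pow_pair_mem_Dmulti (odd_two_mul_add_one k) (Nat.le_succ _) (Nat.le_succ _)
  have hdet : coeffDet θ₁ θ₂ = -definingPoly (2 * k) (2 * k) 1 1 := by
    simp only [coeffDet, definingPoly, θ₁, θ₂]; ring
  refine ⟨h₁, h₂, by simpa only [coeffDet, definingPoly, pow_one] using hdet, fun θ hθ => ?_, ?_⟩
  · exact exists_eq_smul_add_smul_of_mem_Dmulti h₁ h₂ (hdet ▸ (Associated.refl _).neg_right) hθ
  · exact eq_zero_of_smul_add_smul_eq_zero (hdet ▸ neg_ne_zero.2 (definingPoly_ne_zero _ _ _ _))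

theorem stmt4 (k : ℕ) (hk : 1 ≤ k) :
    let θ₁ : S₂ × S₂ := (px ^ (2 * k) * py, px * py ^ (2 * k))
    let θ₂ : S₂ × S₂ := (px ^ (2 * k + 1), py ^ (2 * k + 1))
    θ₁ ∈ Dmulti (2 * k) (2 * k) 1 1 ∧
    θ₂ ∈ Dmulti (2 * k) (2 * k) 1 1 ∧
    θ₁.1 * θ₂.2 - θ₁.2 * θ₂.1 = -(px ^ (2 * k) * py ^ (2 * k) * (px + py) * (px - py)) ∧
    (∀ θ ∈ Dmulti (2 * k) (2 * k) 1 1, ∃ f g : S₂, θ = f • θ₁ + g • θ₂) ∧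
    (∀ f g : S₂, f • θ₁ + g • θ₂ = 0 → f = 0 ∧ g = 0) :=
  stmt4_general k

end
end

section
/- Let a ≥ b ≥ c be even positive integers, and set E = ab + ac + bc and L = E + 3a + 2b + c + 3. For each of the ten triples (a+3,b,c), (a,b+3,c), (a,b,c+3), (a+2,b+1,c), (a+2,b,c+1), (a+1,b+2,c), (a,b+2,c+1), (a+1,b,c+2), (a,b+1,c+2), (a+1,b+1,c+1), the second elementary symmetric function of the triple equals L only in the case (a+1,b+1,c+1) and only if a = b = c. In particular, if a, b, c are even with a ≥ b ≥ c and not all equal, none of the ten triples has second elementary symmetric function equal to L. -/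
theorem stmt11 (a b c : ℕ) (ha : Even a) (hb : Even b) (hc : Even c)
    (hba : b ≤ a) (hcb : c ≤ b) (hc0 : 0 < c) :
    let E := a * b + a * c + b * c
    let L := E + 3 * a + 2 * b + c + 3
    ((a + 3) * b + (a + 3) * c + b * c ≠ L) ∧
    (a * (b + 3) + a * c + (b + 3) * c ≠ L) ∧
    (a * b + a * (c + 3) + b * (c + 3) ≠ L) ∧
    ((a + 2) * (b + 1) + (a + 2) * c + (b + 1) * c ≠ L) ∧
    ((a + 2) * b + (a + 2) * (c + 1) + b * (c + 1) ≠ L) ∧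
    ((a + 1) * (b + 2) + (a + 1) * c + (b + 2) * c ≠ L) ∧
    (a * (b + 2) + a * (c + 1) + (b + 2) * (c + 1) ≠ L) ∧
    ((a + 1) * b + (a + 1) * (c + 2) + b * (c + 2) ≠ L) ∧
    (a * (b + 1) + a * (c + 2) + (b + 1) * (c + 2) ≠ L) ∧
    ((a + 1) * (b + 1) + (a + 1) * (c + 1) + (b + 1) * (c + 1) = L ↔ a = b ∧ b = c) := by
  obtain ⟨x, rfl⟩ := ha
  obtain ⟨y, rfl⟩ := hb
  obtain ⟨z, rfl⟩ := hc
  set a := x + x with hax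
  set b := y + y with hby
  set c := z + z with hcz
  intro E L
  refine ⟨?_, ?_, ?_, ?_, ?_, ?_, ?_, ?_, ?_, ?_⟩
  · intro h
    have h' : 3*b + 3*c = 3*a + 2*b + c + 3 := by simp only [E, L] at h; linarith
    omega
  · intro h
    have h' : 3*a + 3*c = 3*a + 2*b + c + 3 := by simp only [E, L] at h; linarith
    omega
  · intro h
    have h' : 3*a + 3*b = 3*a + 2*b + c + 3 := by simp only [E, L] at h; linarith
    omega
  · intro h
    have h' : a + 2*b + 3*c + 2 = 3*a + 2*b + c + 3 := by simp only [E, L] at h; linarith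
    omega
  · intro h
    have h' : a + 3*b + 2*c + 2 = 3*a + 2*b + c + 3 := by simp only [E, L] at h; linarith
    omega
  · intro h
    have h' : 2*a + b + 3*c + 2 = 3*a + 2*b + c + 3 := by simp only [E, L] at h; linarith
    omega
  · intro h
    have h' : 3*a + b + 2*c + 2 = 3*a + 2*b + c + 3 := by simp only [E, L] at h; linarith
    omega
  · intro h
    have h' : 2*a + 3*b + c + 2 = 3*a + 2*b + c + 3 := by simp only [E, L] at h; linarith
    omega
  · intro h
    have h' : 3*a + 2*b + c + 2 = 3*a + 2*b + c + 3 := by simp only [E, L] at h; linarith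
    omega
  · constructor
    · intro h
      have h' : 2*a + 2*b + 2*c + 3 = 3*a + 2*b + c + 3 := by simp only [E, L] at h; linarith
      omega
    · rintro ⟨h1, h2⟩
      simp only [E, L]; rw [h1, h2]; ring
end

section
/- Let A be the rank-2 arrangement in Q^2 with defining polynomial xy(x+y), and let μ = (a, b, c) be the multiplicity giving the multiarrangement with defining polynomial x^a y^b (x+y)^c, where a, b, c are positive integers with c ≥ a + b − 1. Then D(A, μ) is a free module with a homogeneous basis of degrees a+b and c, i.e. the multiarrangement is free with exponents (a+b, c). -/
noncomputable section
open MvPolynomial Finset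

/-- The module of multiderivations `D(A, μ)` of the rank-2 multiarrangement of the
three lines `x, y, x+y` with multiplicities `(a, b, c)`; a derivation `θ` is
recorded by the pair `(θ(x), θ(y))`. -/
def D3 (a b c : ℕ) : Set (S₂ × S₂) :=
  {θ | px ^ a ∣ θ.1 ∧ py ^ b ∣ θ.2 ∧ (px + py) ^ c ∣ (θ.1 + θ.2)}

lemma prime_X0 : Prime (X 0 : S₂) := by
  rw [← MulEquiv.prime_iff (finSuccEquiv ℚ 1).toMulEquiv]
  have : (finSuccEquiv ℚ 1).toMulEquiv (X 0 : S₂) = Polynomial.X := finSuccEquiv_X_zero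
  rw [this]
  exact Polynomial.prime_X

lemma prime_X1 : Prime (X 1 : S₂) := by
  have h0 := prime_X0
  rw [← MulEquiv.prime_iff (renameEquiv ℚ (Equiv.swap (0 : Fin 2) 1)).toMulEquiv] at h0
  simpa [renameEquiv_apply, Equiv.swap_apply_left] using h0

lemma not_X1_dvd_X0 : ¬ (X 1 : S₂) ∣ X 0 := by
  rintro ⟨k, hk⟩
  have := congrArg (eval (fun i : Fin 2 => if i = 0 then (1:ℚ) else 0)) hk
  simp at this

lemma xy_ne_zero : (X 0 + X 1 : S₂) ≠ 0 := by
  intro hk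
  have := congrArg (eval (fun _ : Fin 2 => (1:ℚ))) hk
  simp at this

theorem stmt13 (a b c : ℕ) (ha : 0 < a) (hb : 0 < b) (hc : 0 < c)
    (h : a + b - 1 ≤ c) :
    ∃ θ₁ θ₂ : S₂ × S₂, θ₁ ∈ D3 a b c ∧ θ₂ ∈ D3 a b c ∧
      θ₁.1.IsHomogeneous (a + b) ∧ θ₁.2.IsHomogeneous (a + b) ∧
      θ₂.1.IsHomogeneous c ∧ θ₂.2.IsHomogeneous c ∧
      (∀ θ ∈ D3 a b c, ∃ f g : S₂, θ = f • θ₁ + g • θ₂) ∧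
      (∀ f g : S₂, f • θ₁ + g • θ₂ = 0 → f = 0 ∧ g = 0) := by
  have hac : a ≤ c := by omega
  have hbc : b ≤ c := by omega
  -- the splitting of (x+y)^c
  set f₀ : S₂ := ∑ i ∈ Ico a (c+1), px ^ (i-a) * py ^ (c-i) * (c.choose i : S₂) with hf₀
  set g₀ : S₂ := ∑ i ∈ range a, px ^ i * py ^ (c-i-b) * (c.choose i : S₂) with hg₀
  have e1 : px ^ a * f₀ = ∑ i ∈ Ico a (c+1), px ^ i * py ^ (c-i) * (c.choose i : S₂) := by
    rw [hf₀, Finset.mul_sum]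
    refine Finset.sum_congr rfl fun i hi => ?_
    simp only [Finset.mem_Ico] at hi
    rw [show (px:S₂)^a * (px^(i-a) * py^(c-i) * (c.choose i : S₂))
        = (px^a * px^(i-a)) * py^(c-i) * (c.choose i : S₂) by ring,
      ← pow_add, show a + (i - a) = i by omega]
  have e2 : py ^ b * g₀ = ∑ i ∈ range a, px ^ i * py ^ (c-i) * (c.choose i : S₂) := by
    rw [hg₀, Finset.mul_sum]
    refine Finset.sum_congr rfl fun i hi => ?_
    simp only [Finset.mem_range] at hi
    rw [show (py:S₂)^b * (px^i * py^(c-i-b) * (c.choose i : S₂))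
        = px^i * (py^b * py^(c-i-b)) * (c.choose i : S₂) by ring,
      ← pow_add, show b + (c - i - b) = c - i by omega]
  have key : px ^ a * f₀ + py ^ b * g₀ = (px + py) ^ c := by
    rw [e1, e2, add_pow, Finset.range_eq_Ico, Finset.range_eq_Ico,
      ← Finset.sum_Ico_consecutive (fun i => px ^ i * py ^ (c-i) * (c.choose i : S₂))
        (Nat.zero_le a) (show a ≤ c + 1 by omega), ← Finset.range_eq_Ico, add_comm]
  have hhom1 : (px ^ a * py ^ b).IsHomogeneous (a + b) := by
    have := ((isHomogeneous_X ℚ (0 : Fin 2)).pow a).mul ((isHomogeneous_X ℚ (1 : Fin 2)).pow b)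
    unfold px py
    rw [show 1 * a + 1 * b = a + b by omega] at this
    exact this
  have hf : f₀.IsHomogeneous (c - a) := by
    rw [hf₀]
    refine IsHomogeneous.sum _ _ _ fun i hi => ?_
    simp only [Finset.mem_Ico] at hi
    have h2 : ((c.choose i : S₂)).IsHomogeneous 0 := by
      rw [show ((c.choose i : S₂)) = C ((c.choose i : ℚ)) from (map_natCast C _).symm]
      exact isHomogeneous_C _ _
    have h1 := (((isHomogeneous_X ℚ (0 : Fin 2)).pow (i-a)).mul ((isHomogeneous_X ℚ (1 : Fin 2)).pow (c-i))).mul h2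
    unfold px py
    rw [show 1 * (i - a) + 1 * (c - i) + 0 = c - a by omega] at h1
    exact h1
  have hg : g₀.IsHomogeneous (c - b) := by
    rw [hg₀]
    refine IsHomogeneous.sum _ _ _ fun i hi => ?_
    simp only [Finset.mem_range] at hi
    have h2 : ((c.choose i : S₂)).IsHomogeneous 0 := by
      rw [show ((c.choose i : S₂)) = C ((c.choose i : ℚ)) from (map_natCast C _).symm]
      exact isHomogeneous_C _ _
    have h1 := (((isHomogeneous_X ℚ (0 : Fin 2)).pow i).mul ((isHomogeneous_X ℚ (1 : Fin 2)).pow (c-i-b))).mul h2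
    unfold px py
    rw [show 1 * i + 1 * (c - i - b) + 0 = c - b by omega] at h1
    exact h1
  refine ⟨(px ^ a * py ^ b, -(px ^ a * py ^ b)), (px ^ a * f₀, py ^ b * g₀),
    ?_, ?_, ?_, ?_, ?_, ?_, ?_, ?_⟩
  · exact ⟨dvd_mul_right _ _, (dvd_neg).mpr (dvd_mul_left _ _), by simp⟩
  · exact ⟨dvd_mul_right _ _, dvd_mul_right _ _, by rw [key]⟩
  · exact hhom1
  · exact hhom1.neg
  · have := ((isHomogeneous_X ℚ (0 : Fin 2)).pow a).mul hf
    unfold px py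
    rw [show 1 * a + (c - a) = c by omega] at this
    exact this
  · have := ((isHomogeneous_X ℚ (1 : Fin 2)).pow b).mul hg
    unfold px py
    rw [show 1 * b + (c - b) = c by omega] at this
    exact this
  · -- spanning
    rintro θ ⟨⟨F, hF⟩, ⟨G, hG⟩, ⟨H, hH⟩⟩
    have hsum : px ^ a * F + py ^ b * G = (px ^ a * f₀ + py ^ b * g₀) * H := by
      rw [key, ← hF, ← hG, hH]
    have hdvd : py ^ b ∣ px ^ a * (F - H * f₀) :=
      ⟨H * g₀ - G, by linear_combination hsum⟩
    have hx : ¬ (X 1 : S₂) ∣ px ^ a := fun hd =>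
      not_X1_dvd_X0 (prime_X1.dvd_of_dvd_pow hd)
    have hdvd' : py ^ b ∣ (F - H * f₀) :=
      prime_X1.pow_dvd_of_dvd_mul_left b hx hdvd
    obtain ⟨k, hk⟩ := hdvd'
    have hF' : F = H * f₀ + py ^ b * k := by linear_combination hk
    have hG' : G = H * g₀ - px ^ a * k := by
      have hne : (py : S₂) ^ b ≠ 0 := pow_ne_zero _ (X_ne_zero 1)
      apply mul_left_cancel₀ hne
      rw [hF'] at hsum
      linear_combination hsum
    refine ⟨k, H, Prod.ext ?_ ?_⟩
    · simp only [Prod.fst_add, Prod.smul_fst, smul_eq_mul]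
      rw [hF, hF']; ring
    · simp only [Prod.snd_add, Prod.smul_snd, smul_eq_mul]
      rw [hG, hG']; ring
  · -- independence
    intro f g hfg
    have h1 : f * (px ^ a * py ^ b) + g * (px ^ a * f₀) = 0 := by
      have := congrArg Prod.fst hfg
      simpa [smul_eq_mul] using this
    have h2 : f * (-(px ^ a * py ^ b)) + g * (py ^ b * g₀) = 0 := by
      have := congrArg Prod.snd hfg
      simpa [smul_eq_mul] using this
    have hg0 : g * (px + py) ^ c = 0 := by
      rw [← key]; linear_combination h1 + h2
    have hxyc : ((px + py) : S₂) ^ c ≠ 0 := pow_ne_zero _ xy_ne_zero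
    have hgz : g = 0 := by
      rcases mul_eq_zero.mp hg0 with h' | h'
      · exact h'
      · exact absurd h' hxyc
    refine ⟨?_, hgz⟩
    rw [hgz, zero_mul, add_zero] at h1
    have hne : (px : S₂) ^ a * py ^ b ≠ 0 :=
      mul_ne_zero (pow_ne_zero _ (X_ne_zero 0)) (pow_ne_zero _ (X_ne_zero 1))
    rcases mul_eq_zero.mp h1 with h' | h'
    · exact h'
    · exact absurd h' hne

end
end
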